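/- For all m ≥ 1, 2·∑_{i=1}^{m} k_i = t_{m-2} + t_{m-3} + m, where t is the Tribonacci number sequence (with t_{-2}=0, t_{-1}=t_0=1). -/

import Mathlib

/-! The recurrence of `ker` is the Tribonacci recurrence shifted by its fixed point `1`, which
gives the closed form `2 k_n = t_{n-2} - t_{n-4} + 1`; summed over `1 ≤ i ≤ m` it telescopes. -/

/-- Tribonacci numbers, index-shifted so that `trib n` represents t_{n-2}:
`trib 0 = t₋₂ = 0`, `trib 1 = t₋₁ = 1`, `trib 2 = t₀ = 1`, and
`trib (n+3) = trib (n+2) + trib (n+1) + trib n`. -/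
def trib : ℕ → ℕ
  | 0 => 0
  | 1 => 1
  | 2 => 1
  | n + 3 => trib (n + 2) + trib (n + 1) + trib n

/-- Kernel numbers: k₀ = 0, k₁ = k₂ = 1, k_m = k_{m-1} + k_{m-2} + k_{m-3} - 1 for m ≥ 3. -/
def ker : ℕ → ℕ
  | 0 => 0
  | 1 => 1
  | 2 => 1
  | n + 3 => ker (n + 2) + ker (n + 1) + ker n - 1

lemma one_le_ker : ∀ n, 1 ≤ ker (n + 1)
  | 0 | 1 => le_rfl
  | n + 2 => by
    show 1 ≤ ker (n + 3)
    have h₁ : 1 ≤ ker (n + 1) := one_le_ker n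
    have h₂ : 1 ≤ ker (n + 2) := one_le_ker (n + 1)
    have hker : ker (n + 3) = ker (n + 2) + ker (n + 1) + ker n - 1 := rfl
    omega

lemma ker_add_three_add_one (n : ℕ) : ker (n + 3) + 1 = ker (n + 2) + ker (n + 1) + ker n := by
  have h : 1 ≤ ker (n + 2) := one_le_ker (n + 1)
  have hker : ker (n + 3) = ker (n + 2) + ker (n + 1) + ker n - 1 := rfl
  omega

lemma two_mul_ker_add_trib : ∀ n, 2 * ker (n + 2) + trib n = trib (n + 2) + 1
  | 0 | 1 | 2 => rfl
  | n + 3 => by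
    show 2 * ker (n + 5) + trib (n + 3) = trib (n + 5) + 1
    have h₀ : 2 * ker (n + 2) + trib n = trib (n + 2) + 1 := two_mul_ker_add_trib n
    have h₁ : 2 * ker (n + 3) + trib (n + 1) = trib (n + 3) + 1 := two_mul_ker_add_trib (n + 1)
    have h₂ : 2 * ker (n + 4) + trib (n + 2) = trib (n + 4) + 1 := two_mul_ker_add_trib (n + 2)
    have hker : ker (n + 5) + 1 = ker (n + 4) + ker (n + 3) + ker (n + 2) :=
      ker_add_three_add_one (n + 2)
    have htrib₃ : trib (n + 3) = trib (n + 2) + trib (n + 1) + trib n := rfl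
    have htrib₅ : trib (n + 5) = trib (n + 4) + trib (n + 3) + trib (n + 2) := rfl
    omega

theorem two_mul_sum_ker_eq_trib_general (m : ℕ) :
    2 * ∑ i ∈ Finset.Icc 1 m, ker i = trib m + trib (m - 1) + m := by
  induction m with
  | zero => rfl
  | succ m ih =>
    have step : 2 * ker (m + 1) + trib (m - 1) = trib (m + 1) + 1 := by
      cases m with
      | zero => rfl
      | succ m => exact two_mul_ker_add_trib m
    rw [Finset.sum_Icc_succ_top (Nat.le_add_left 1 m), mul_add, ih, Nat.add_sub_cancel]
    omega

/-- For all m ≥ 1, 2·∑_{i=1}^{m} k_i = t_{m-2} + t_{m-3} + m.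
(Here `trib m` = t_{m-2} and `trib (m-1)` = t_{m-3}.) -/
theorem two_mul_sum_ker_eq_trib (m : ℕ) (hm : 1 ≤ m) :
    2 * ∑ i ∈ Finset.Icc 1 m, ker i = trib m + trib (m - 1) + m :=
  two_mul_sum_ker_eq_trib_general m
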